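/- The inequality Tr[X^{1-ν} ln_ν(Y^{-1/2} X Y^{-1/2})] ≥ (Tr[X] - (Tr[X])^{1-ν}(Tr[Y])^ν)/ν fails in general under I ≤ Y ≤ X: for X = [[10,5],[5,5]], Y = diag(1,2), and ν = 0.9, the left side is strictly smaller than the right side. -/

import Mathlib

open Matrix
open scoped ComplexOrder

/-- Matrix power via continuous functional calculus (real power of eigenvalues). -/
noncomputable def mpow {n : ℕ} (A : Matrix (Fin n) (Fin n) ℂ) (p : ℝ) : Matrix (Fin n) (Fin n) ℂ :=
  cfc (fun x : ℝ => x ^ p) A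

/-- Absolute value of a matrix: |X| = (X*X)^{1/2}. -/
noncomputable def matAbs {n : ℕ} (A : Matrix (Fin n) (Fin n) ℂ) : Matrix (Fin n) (Fin n) ℂ :=
  mpow (Aᴴ * A) (1/2)

/-- Deformed logarithm ln_ν applied via functional calculus. -/
noncomputable def tlog {n : ℕ} (ν : ℝ) (A : Matrix (Fin n) (Fin n) ℂ) : Matrix (Fin n) (Fin n) ℂ :=
  cfc (fun x : ℝ => (x ^ ν - 1) / ν) A

/-- Deformed exponential exp_ν applied via functional calculus. -/
noncomputable def texp {n : ℕ} (ν : ℝ) (A : Matrix (Fin n) (Fin n) ℂ) : Matrix (Fin n) (Fin n) ℂ :=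
  cfc (fun x : ℝ => (1 + ν * x) ^ (1/ν)) A

/-- Tsallis relative entropy D_ν(X|Y) = (Tr X - Tr[X^{1-ν} Y^ν]) / ν. -/
noncomputable def tsallisRel {n : ℕ} (X Y : Matrix (Fin n) (Fin n) ℂ) (ν : ℝ) : ℝ :=
  ((X.trace).re - ((mpow X (1 - ν) * mpow Y ν).trace).re) / ν

/-- ν-weighted matrix geometric mean X #_ν Y. -/
noncomputable def geomMean {n : ℕ} (X Y : Matrix (Fin n) (Fin n) ℂ) (ν : ℝ) :
    Matrix (Fin n) (Fin n) ℂ :=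
  mpow X (1/2) * mpow (mpow X (-(1/2)) * Y * mpow X (-(1/2))) ν * mpow X (1/2)


section Helpers

variable {A : Matrix (Fin 2) (Fin 2) ℂ} (hA : A.IsHermitian)

lemma my_cfc_trace (f : ℝ → ℝ) : (hA.cfc f).trace = ∑ i, (f (hA.eigenvalues i) : ℂ) := by
  rw [Matrix.IsHermitian.cfc, Unitary.conjStarAlgAut_apply, Matrix.trace_mul_cycle,
    Unitary.coe_star_mul_self hA.eigenvectorUnitary, one_mul, Matrix.trace_diagonal]
  rfl

lemma my_cfc_psd (f : ℝ → ℝ) (h : ∀ i, 0 ≤ f (hA.eigenvalues i)) : (hA.cfc f).PosSemidef := by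
  rw [Matrix.IsHermitian.cfc, Unitary.conjStarAlgAut_apply]
  have : (Matrix.diagonal (RCLike.ofReal ∘ f ∘ hA.eigenvalues) : Matrix (Fin 2) (Fin 2) ℂ).PosSemidef := by
    apply Matrix.PosSemidef.diagonal
    intro i
    simpa using Complex.zero_le_real.mpr (h i)
  simpa [Matrix.star_eq_conjTranspose] using
    this.mul_mul_conjTranspose_same (hA.eigenvectorUnitary : Matrix (Fin 2) (Fin 2) ℂ)

lemma my_cfc_add (f g : ℝ → ℝ) : hA.cfc f + hA.cfc g = hA.cfc (fun x => f x + g x) := by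
  simp only [Matrix.IsHermitian.cfc, Unitary.conjStarAlgAut_apply]
  rw [← Matrix.add_mul, ← Matrix.mul_add]
  have : (Matrix.diagonal (RCLike.ofReal ∘ f ∘ hA.eigenvalues) : Matrix (Fin 2) (Fin 2) ℂ)
      + Matrix.diagonal (RCLike.ofReal ∘ g ∘ hA.eigenvalues)
      = Matrix.diagonal (RCLike.ofReal ∘ (fun x => f x + g x) ∘ hA.eigenvalues) := by
    ext i j
    by_cases h : i = j <;> simp [Matrix.diagonal_apply, h]
  rw [this]

lemma my_cfc_smul (b : ℝ) (f : ℝ → ℝ) : hA.cfc (fun x => b * f x) = b • hA.cfc f := by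
  simp only [Matrix.IsHermitian.cfc, Unitary.conjStarAlgAut_apply]
  have : Matrix.diagonal (RCLike.ofReal ∘ (fun x => b * f x) ∘ hA.eigenvalues)
      = b • (Matrix.diagonal (RCLike.ofReal ∘ f ∘ hA.eigenvalues) : Matrix (Fin 2) (Fin 2) ℂ) := by
    ext i j
    by_cases h : i = j <;> simp [Matrix.diagonal_apply, h, Complex.real_smul]
  rw [this, mul_smul_comm, smul_mul_assoc]

lemma my_cfc_const (a : ℝ) : hA.cfc (fun _ => a) = a • 1 := by
  rw [Matrix.IsHermitian.cfc, Unitary.conjStarAlgAut_apply]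
  have : Matrix.diagonal (RCLike.ofReal ∘ (fun _ : ℝ => a) ∘ hA.eigenvalues)
      = a • (1 : Matrix (Fin 2) (Fin 2) ℂ) := by
    ext i j
    by_cases h : i = j <;> simp [Matrix.diagonal_apply, Matrix.one_apply, h, Complex.real_smul]
  rw [this, mul_smul_comm, smul_mul_assoc, mul_one, ← Unitary.coe_star,
    Unitary.coe_mul_star_self hA.eigenvectorUnitary]

lemma my_cfc_id : hA.cfc (fun x => x) = A := by
  rw [Matrix.IsHermitian.cfc]
  conv_rhs => rw [hA.spectral_theorem]
  rfl

lemma my_cfc_affine (a b : ℝ) : hA.cfc (fun x => a + b * x) = a • 1 + b • A := by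
  rw [← my_cfc_add hA (fun _ => a) (fun x => b * x), my_cfc_const, my_cfc_smul, my_cfc_id]

lemma my_cfc_congr {f g : ℝ → ℝ} (h : ∀ i, f (hA.eigenvalues i) = g (hA.eigenvalues i)) :
    hA.cfc f = hA.cfc g := by
  simp only [Matrix.IsHermitian.cfc]
  have : (RCLike.ofReal ∘ f ∘ hA.eigenvalues : Fin 2 → ℂ) = RCLike.ofReal ∘ g ∘ hA.eigenvalues := by
    funext i
    simp [h i]
  rw [this]

lemma psd_diag_nonneg {n : ℕ} {M : Matrix (Fin n) (Fin n) ℂ} (hM : M.PosSemidef) (i : Fin n) :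
    0 ≤ M i i := by
  have := hM.dotProduct_mulVec_nonneg (Pi.single i 1)
  simpa [Matrix.mulVec, dotProduct, Pi.single_apply] using this

lemma trace_psd_re_nonneg {n : ℕ} {M : Matrix (Fin n) (Fin n) ℂ} (hM : M.PosSemidef) :
    0 ≤ (M.trace).re := by
  rw [Matrix.trace, Complex.re_sum]
  apply Finset.sum_nonneg
  intro i _
  have := psd_diag_nonneg hM i
  rw [Complex.le_def] at this
  simpa using this.1

lemma trace_mul_psd_re_nonneg {n : ℕ} {P Q : Matrix (Fin n) (Fin n) ℂ}
    (hP : P.PosSemidef) (hQ : Q.PosSemidef) : 0 ≤ ((P * Q).trace).re := by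
  obtain ⟨B, rfl⟩ : ∃ B : Matrix (Fin n) (Fin n) ℂ, Q = Bᴴ * B := by
    open scoped MatrixOrder in
    obtain ⟨B, hB⟩ := CStarAlgebra.nonneg_iff_eq_star_mul_self.mp hQ.nonneg
    exact ⟨B, hB⟩
  have : (P * (Bᴴ * B)).trace = (B * P * Bᴴ).trace := by
    rw [← Matrix.mul_assoc, Matrix.trace_mul_cycle]
  rw [this]
  exact trace_psd_re_nonneg (hP.mul_mul_conjTranspose_same B)

lemma spec_det_zero {M : Matrix (Fin 2) (Fin 2) ℂ} {x : ℝ} (hx : x ∈ spectrum ℝ M) :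
    ((x : ℂ) • (1 : Matrix (Fin 2) (Fin 2) ℂ) - M).det = 0 := by
  rw [spectrum.mem_iff] at hx
  have halg : algebraMap ℝ (Matrix (Fin 2) (Fin 2) ℂ) x = (x : ℂ) • 1 := by
    ext i j
    rw [Matrix.algebraMap_eq_diagonal]
    by_cases h : i = j <;> simp [Matrix.diagonal_apply, Matrix.one_apply, h,
      Algebra.algebraMap_eq_smul_one, Complex.real_smul]
  rw [halg] at hx
  by_contra h
  exact hx ((Matrix.isUnit_iff_isUnit_det _).mpr (isUnit_iff_ne_zero.mpr h))

/-- numeric rpow bounds -/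
lemma rpow_le_of_pow_ge {c x : ℝ} (hc : 0 ≤ c) (hx : 0 ≤ x) (h : x ≤ c ^ (10:ℕ)) :
    x ^ (1/10 : ℝ) ≤ c := by
  calc x ^ (1/10:ℝ) ≤ (c ^ (10:ℕ)) ^ (1/10:ℝ) :=
        Real.rpow_le_rpow hx h (by norm_num)
    _ = c := by
        rw [← Real.rpow_natCast c 10, ← Real.rpow_mul hc]
        norm_num

lemma le_rpow_of_pow_le {c x : ℝ} (hc : 0 ≤ c) (h : c ^ (10:ℕ) ≤ x) :
    c ≤ x ^ (1/10 : ℝ) := by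
  calc c = (c ^ (10:ℕ)) ^ (1/10:ℝ) := by
        rw [← Real.rpow_natCast c 10, ← Real.rpow_mul hc]; norm_num
    _ ≤ x ^ (1/10:ℝ) := Real.rpow_le_rpow (by positivity) h (by norm_num)

lemma r1 {x : ℝ} (h0 : 0 ≤ x) (h15 : x ≤ 15) : x ^ ((1:ℝ) - 9/10) ≤ 33/25 := by
  have h : ((1:ℝ) - 9/10) = 1/10 := by norm_num
  rw [h]
  exact rpow_le_of_pow_ge (by norm_num) h0 (le_trans h15 (by norm_num))

lemma r2 {x : ℝ} (hx : 1 ≤ x) :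
    (x ^ ((9:ℝ)/10) - 1) / (9/10) ≤ -430/1107 + (900/1107) * x := by
  have hx0 : (0:ℝ) ≤ x := by linarith
  have hy : x ^ ((9:ℝ)/10) * 8 ^ ((1:ℝ)/10) ≤ (9/10) * x + (1/10) * 8 :=
    Real.geom_mean_le_arith_mean2_weighted (by norm_num) (by norm_num) hx0 (by norm_num)
      (by norm_num)
  have h8 : (123/100 : ℝ) ≤ 8 ^ ((1:ℝ)/10) := le_rpow_of_pow_le (by norm_num) (by norm_num)
  have hpos : (0:ℝ) ≤ x ^ ((9:ℝ)/10) := Real.rpow_nonneg hx0 _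
  have : x ^ ((9:ℝ)/10) * (123/100) ≤ (9/10) * x + (1/10) * 8 :=
    le_trans (by nlinarith) hy
  linarith

lemma r3 {x : ℝ} (hx : 1 ≤ x) : 0 ≤ (x ^ ((9:ℝ)/10) - 1) / (9/10) := by
  have h : (1:ℝ) ^ ((9:ℝ)/10) ≤ x ^ ((9:ℝ)/10) :=
    Real.rpow_le_rpow (by norm_num) hx (by norm_num)
  rw [Real.one_rpow] at h
  exact div_nonneg (by linarith) (by norm_num)

lemma r4 : (15:ℝ) ^ ((1:ℝ) - 9/10) * 3 ^ ((9:ℝ)/10) ≤ 3 * (59/50) := by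
  have h1 : ((1:ℝ) - 9/10) = 1/10 := by norm_num
  have hmul : (15:ℝ) ^ ((1:ℝ)/10) = 5 ^ ((1:ℝ)/10) * 3 ^ ((1:ℝ)/10) := by
    rw [show (15:ℝ) = 5 * 3 by norm_num, Real.mul_rpow (by norm_num) (by norm_num)]
  have h3 : (3:ℝ) ^ ((1:ℝ)/10) * 3 ^ ((9:ℝ)/10) = 3 := by
    rw [← Real.rpow_add (by norm_num)]; norm_num
  have h5 : (5:ℝ) ^ ((1:ℝ)/10) ≤ 59/50 :=
    rpow_le_of_pow_ge (by norm_num) (by norm_num) (by norm_num)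
  calc (15:ℝ) ^ ((1:ℝ) - 9/10) * 3 ^ ((9:ℝ)/10)
      = 5 ^ ((1:ℝ)/10) * (3 ^ ((1:ℝ)/10) * 3 ^ ((9:ℝ)/10)) := by rw [h1, hmul]; ring
    _ = 5 ^ ((1:ℝ)/10) * 3 := by rw [h3]
    _ ≤ (59/50) * 3 := by nlinarith [Real.rpow_nonneg (show (0:ℝ) ≤ 5 by norm_num) ((1:ℝ)/10)]
    _ = 3 * (59/50) := by ring

end Helpers

section Matrices

noncomputable def rs : ℝ := (Real.sqrt 2)⁻¹

lemma rs_mul_self : rs * rs = 1/2 := by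
  rw [rs, ← mul_inv, Real.mul_self_sqrt (by norm_num)]
  norm_num

lemma rs_nonneg : 0 ≤ rs := by
  rw [rs]
  positivity

noncomputable def Zmat : Matrix (Fin 2) (Fin 2) ℂ := !![10, 5*(rs:ℂ); 5*(rs:ℂ), 5/2]

lemma hermX : (!![10, 5; 5, 5] : Matrix (Fin 2) (Fin 2) ℂ).IsHermitian := by
  ext i j
  fin_cases i <;> fin_cases j <;> simp [Matrix.conjTranspose_apply]

lemma hermY : (!![1, 0; 0, 2] : Matrix (Fin 2) (Fin 2) ℂ).IsHermitian := by
  ext i j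
  fin_cases i <;> fin_cases j <;> simp [Matrix.conjTranspose_apply]

lemma hermZ : Zmat.IsHermitian := by
  ext i j
  fin_cases i <;> fin_cases j <;>
    simp [Zmat, Matrix.conjTranspose_apply, Complex.conj_ofReal]

lemma eigY (i : Fin 2) : hermY.eigenvalues i = 1 ∨ hermY.eigenvalues i = 2 := by
  have hmem := hermY.eigenvalues_mem_spectrum_real i
  set μ := hermY.eigenvalues i
  have hdet := spec_det_zero hmem
  rw [Matrix.det_fin_two] at hdet
  simp only [Matrix.sub_apply, Matrix.smul_apply, Matrix.one_apply, Matrix.cons_val_zero,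
    Matrix.cons_val_one, Matrix.head_cons, Matrix.head_fin_const] at hdet
  norm_num at hdet
  rcases hdet with h | h
  · left
    have : ((μ : ℂ)) = 1 := by linear_combination h
    exact_mod_cast this
  · right
    have : ((μ : ℂ)) = 2 := by linear_combination h
    exact_mod_cast this

lemma eigX (i : Fin 2) : 0 ≤ hermX.eigenvalues i ∧ hermX.eigenvalues i ≤ 15 := by
  have hmem := hermX.eigenvalues_mem_spectrum_real i
  set μ := hermX.eigenvalues i
  have hdet := spec_det_zero hmem
  rw [Matrix.det_fin_two] at hdet
  simp only [Matrix.sub_apply, Matrix.smul_apply, Matrix.one_apply, Matrix.cons_val_zero,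
    Matrix.cons_val_one, Matrix.head_cons, Matrix.head_fin_const] at hdet
  norm_num at hdet
  have hc : ((μ^2 - 15*μ + 25 : ℝ) : ℂ) = 0 := by push_cast; linear_combination hdet
  have hr : (μ^2 - 15*μ + 25 : ℝ) = 0 := by exact_mod_cast hc
  constructor
  · nlinarith [sq_nonneg μ]
  · nlinarith [sq_nonneg μ]

lemma eigZ (i : Fin 2) : 1 ≤ hermZ.eigenvalues i := by
  have hmem := hermZ.eigenvalues_mem_spectrum_real i
  set μ := hermZ.eigenvalues i
  have hdet := spec_det_zero hmem
  rw [Matrix.det_fin_two] at hdet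
  simp only [Zmat, Matrix.sub_apply, Matrix.smul_apply, Matrix.one_apply, Matrix.cons_val_zero,
    Matrix.cons_val_one, Matrix.head_cons, Matrix.head_fin_const] at hdet
  norm_num at hdet
  have hrs : ((rs : ℂ)) * ((rs : ℂ)) = 1/2 := by
    rw [← Complex.ofReal_mul, rs_mul_self]
    norm_num
  have hc : ((μ^2 - (25/2)*μ + 25/2 : ℝ) : ℂ) = 0 := by
    push_cast
    linear_combination hdet + 25 * hrs
  have hr : (μ^2 - (25/2)*μ + 25/2 : ℝ) = 0 := by exact_mod_cast hc
  nlinarith [sq_nonneg μ, sq_nonneg (μ - 1)]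

end Matrices


lemma posdefX : (!![10, 5; 5, 5] : Matrix (Fin 2) (Fin 2) ℂ).PosDef := by
  refine Matrix.PosDef.of_dotProduct_mulVec_pos hermX fun v hv => ?_
  set a := v 0; set b := v 1
  have hq : star v ⬝ᵥ (!![10, 5; 5, 5] : Matrix (Fin 2) (Fin 2) ℂ) *ᵥ v
      = 5 * ((starRingEnd ℂ) (a + b) * (a + b)) + 5 * ((starRingEnd ℂ) a * a) := by
    simp [dotProduct, Matrix.mulVec, Fin.sum_univ_two, Matrix.cons_val_zero,
      Matrix.cons_val_one, map_add]
    ring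
  rw [hq, Complex.conj_mul', Complex.conj_mul']
  norm_cast
  have : a ≠ 0 ∨ a + b ≠ 0 := by
    by_contra h
    push_neg at h
    apply hv
    ext i
    fin_cases i
    · exact h.1
    · have := h.2; simp [h.1] at this; simpa using this
  rcases this with h | h
  · nlinarith [norm_pos_iff.mpr h, norm_nonneg (a+b), sq_nonneg ‖a+b‖, sq_nonneg ‖a‖]
  · nlinarith [norm_pos_iff.mpr h, norm_nonneg a, sq_nonneg ‖a+b‖, sq_nonneg ‖a‖]


lemma posdefY : (!![1, 0; 0, 2] : Matrix (Fin 2) (Fin 2) ℂ).PosDef := by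
  refine Matrix.PosDef.of_dotProduct_mulVec_pos (by ext i j; fin_cases i <;> fin_cases j <;> simp [Matrix.conjTranspose_apply])
    fun v hv => ?_
  set a := v 0; set b := v 1
  have hq : star v ⬝ᵥ (!![1, 0; 0, 2] : Matrix (Fin 2) (Fin 2) ℂ) *ᵥ v
      = 1 * ((starRingEnd ℂ) a * a) + 2 * ((starRingEnd ℂ) b * b) := by
    simp [dotProduct, Matrix.mulVec, Fin.sum_univ_two]
    ring
  rw [hq, Complex.conj_mul', Complex.conj_mul']
  norm_cast
  have : a ≠ 0 ∨ b ≠ 0 := by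
    by_contra h
    push_neg at h
    exact hv (by ext i; fin_cases i; exacts [h.1, h.2])
  rcases this with h | h
  · nlinarith [norm_pos_iff.mpr h, norm_nonneg a, sq_nonneg ‖a‖, sq_nonneg ‖b‖]
  · nlinarith [norm_pos_iff.mpr h, norm_nonneg b, sq_nonneg ‖a‖, sq_nonneg ‖b‖]

lemma psdYm1 : ((!![1, 0; 0, 2] : Matrix (Fin 2) (Fin 2) ℂ) - 1).PosSemidef := by
  have h1 : (!![1, 0; 0, 2] : Matrix (Fin 2) (Fin 2) ℂ) - 1 = !![0, 0; 0, 1] := by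
    ext i j
    fin_cases i <;> fin_cases j <;> simp [Matrix.one_apply] <;> norm_num
  rw [h1]
  refine Matrix.PosSemidef.of_dotProduct_mulVec_nonneg (by ext i j; fin_cases i <;> fin_cases j <;> simp [Matrix.conjTranspose_apply])
    fun v => ?_
  have hq : star v ⬝ᵥ (!![0, 0; 0, 1] : Matrix (Fin 2) (Fin 2) ℂ) *ᵥ v
      = (starRingEnd ℂ) (v 1) * (v 1) := by
    simp [dotProduct, Matrix.mulVec, Fin.sum_univ_two]
  rw [hq, Complex.conj_mul']
  norm_cast
  positivity

lemma psdXmY : ((!![10, 5; 5, 5] : Matrix (Fin 2) (Fin 2) ℂ)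
    - !![1, 0; 0, 2]).PosSemidef := by
  have h1 : (!![10, 5; 5, 5] : Matrix (Fin 2) (Fin 2) ℂ) - !![1, 0; 0, 2]
      = !![9, 5; 5, 3] := by
    ext i j
    fin_cases i <;> fin_cases j <;> simp <;> norm_num
  rw [h1]
  refine Matrix.PosSemidef.of_dotProduct_mulVec_nonneg (by ext i j; fin_cases i <;> fin_cases j <;> simp [Matrix.conjTranspose_apply])
    fun v => ?_
  set a := v 0; set b := v 1
  have hq : star v ⬝ᵥ (!![9, 5; 5, 3] : Matrix (Fin 2) (Fin 2) ℂ) *ᵥ v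
      = (1/9) * ((starRingEnd ℂ) (9*a + 5*b) * (9*a + 5*b)) + (2/9) * ((starRingEnd ℂ) b * b) := by
    simp [dotProduct, Matrix.mulVec, Fin.sum_univ_two, map_add, _root_.map_mul, map_ofNat]
    ring
  rw [hq, Complex.conj_mul', Complex.conj_mul']
  have hc : (1/9 : ℂ) * (‖9*a+5*b‖ : ℂ)^2 + (2/9 : ℂ) * (‖b‖ : ℂ)^2
      = ((1/9*‖9*a+5*b‖^2 + 2/9*‖b‖^2 : ℝ) : ℂ) := by push_cast; ring
  rw [hc, Complex.zero_le_real]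
  positivity

section Part2

lemma mpowY : mpow (!![1, 0; 0, 2] : Matrix (Fin 2) (Fin 2) ℂ) (-(1/2))
    = !![1, 0; 0, (rs:ℂ)] := by
  rw [mpow, Matrix.IsHermitian.cfc_eq hermY]
  have h1 : hermY.cfc (fun x : ℝ => x ^ (-(1/2) : ℝ))
      = hermY.cfc (fun x => (2 - rs) + (rs - 1) * x) := by
    apply my_cfc_congr
    intro i
    rcases eigY i with h | h <;> rw [h]
    · rw [Real.one_rpow]
      ring
    · rw [Real.rpow_neg (by norm_num : (0:ℝ) ≤ 2), ← Real.sqrt_eq_rpow, ← rs]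
      ring
  rw [h1, my_cfc_affine]
  ext i j
  fin_cases i <;> fin_cases j <;>
    simp [Matrix.one_apply, Complex.real_smul] <;> push_cast <;> ring

lemma NXN : (!![1, 0; 0, (rs:ℂ)] : Matrix (Fin 2) (Fin 2) ℂ) * !![10, 5; 5, 5]
    * !![1, 0; 0, (rs:ℂ)] = Zmat := by
  have hrs : ((rs : ℂ)) * ((rs : ℂ)) = 1/2 := by
    rw [← Complex.ofReal_mul, rs_mul_self]; norm_num
  ext i j
  fin_cases i <;> fin_cases j <;>
    simp [Zmat, Matrix.mul_apply, Fin.sum_univ_two] <;> first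
    | linear_combination (5:ℂ) * hrs
    | linear_combination (10:ℂ) * hrs
    | linear_combination (-5:ℂ) * hrs
    | ring

end Part2


theorem main_ineq :
    ((mpow (!![10, 5; 5, 5] : Matrix (Fin 2) (Fin 2) ℂ) (1 - 9/10) *
      tlog (9/10) (mpow (!![1, 0; 0, 2] : Matrix (Fin 2) (Fin 2) ℂ) (-(1/2)) * !![10, 5; 5, 5] *
        mpow (!![1, 0; 0, 2] : Matrix (Fin 2) (Fin 2) ℂ) (-(1/2)))).trace).re <
      (((!![10, 5; 5, 5] : Matrix (Fin 2) (Fin 2) ℂ).trace).re -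
        ((!![10, 5; 5, 5] : Matrix (Fin 2) (Fin 2) ℂ).trace).re ^ ((1:ℝ) - 9/10) *
        ((!![1, 0; 0, 2] : Matrix (Fin 2) (Fin 2) ℂ).trace).re ^ ((9:ℝ)/10)) / (9/10) := by
  set f₁ : ℝ → ℝ := fun x => x ^ ((1:ℝ) - 9/10) with hf₁
  set g : ℝ → ℝ := fun x => (x ^ ((9:ℝ)/10) - 1) / (9/10) with hg
  rw [mpowY, NXN, tlog, mpow, Matrix.IsHermitian.cfc_eq hermZ, Matrix.IsHermitian.cfc_eq hermX]
  -- traces of X and Y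
  have hXtr : ((!![10, 5; 5, 5] : Matrix (Fin 2) (Fin 2) ℂ).trace).re = 15 := by
    rw [Matrix.trace_fin_two]; simp; norm_num
  have hYtr : ((!![1, 0; 0, 2] : Matrix (Fin 2) (Fin 2) ℂ).trace).re = 3 := by
    rw [Matrix.trace_fin_two]; simp; norm_num
  rw [hXtr, hYtr]
  -- split B
  have hsplit : hermX.cfc f₁ = (33/25 : ℝ) • 1 - hermX.cfc (fun x => 33/25 - f₁ x) := by
    have h0 := my_cfc_add hermX f₁ (fun x => 33/25 - f₁ x)
    have h2 : (fun x => f₁ x + (33/25 - f₁ x)) = fun _ : ℝ => (33/25 : ℝ) := by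
      funext x; ring
    rw [h2, my_cfc_const] at h0
    exact eq_sub_of_add_eq h0
  have hA'psd : (hermZ.cfc g).PosSemidef := my_cfc_psd hermZ g (fun i => r3 (eigZ i))
  have hCpsd : (hermX.cfc (fun x => 33/25 - f₁ x)).PosSemidef := by
    apply my_cfc_psd
    intro i
    obtain ⟨h0, h15⟩ := eigX i
    have := r1 h0 h15
    simp only [hf₁]
    linarith
  have hcross : 0 ≤ (((hermX.cfc (fun x => 33/25 - f₁ x)) * hermZ.cfc g).trace).re :=
    trace_mul_psd_re_nonneg hCpsd hA'psd
  have htr : ((hermX.cfc f₁ * hermZ.cfc g).trace).re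
      = 33/25 * ((hermZ.cfc g).trace).re
        - ((hermX.cfc (fun x => 33/25 - f₁ x) * hermZ.cfc g).trace).re := by
    rw [hsplit, Matrix.sub_mul, Matrix.trace_sub, smul_mul_assoc, one_mul, Matrix.trace_smul]
    simp [Complex.sub_re, Complex.smul_re]
  -- eigenvalue sum of Z
  have hsum : hermZ.eigenvalues 0 + hermZ.eigenvalues 1 = 25/2 := by
    have h := my_cfc_trace hermZ (fun x => x)
    rw [my_cfc_id, Fin.sum_univ_two] at h
    rw [Matrix.trace_fin_two] at h
    norm_num [Zmat] at h
    have h2 : ((hermZ.eigenvalues 0 + hermZ.eigenvalues 1 : ℝ) : ℂ) = ((25/2 : ℝ) : ℂ) := by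
      push_cast
      change _ = ((hermZ.eigenvalues 0 : ℂ)) + hermZ.eigenvalues 1 at h
      linear_combination -h
    exact_mod_cast h2
  have htrA' : ((hermZ.cfc g).trace).re = g (hermZ.eigenvalues 0) + g (hermZ.eigenvalues 1) := by
    rw [my_cfc_trace hermZ g, Fin.sum_univ_two]
    simp
  have hbound : ((hermZ.cfc g).trace).re ≤ 10390/1107 := by
    rw [htrA']
    have h0 := r2 (eigZ 0)
    have h1 := r2 (eigZ 1)
    simp only [hg]
    nlinarith [hsum]
  rw [htr]
  have hL : 33/25 * ((hermZ.cfc g).trace).re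
      - ((hermX.cfc (fun x => 33/25 - f₁ x) * hermZ.cfc g).trace).re ≤ 33/25 * (10390/1107) := by
    nlinarith
  have hR : (15 - 3*(59/50) : ℝ)/(9/10) ≤ (15 - 15 ^ ((1:ℝ) - 9/10) * 3 ^ ((9:ℝ)/10))/(9/10) := by
    exact (div_le_div_iff_of_pos_right (by norm_num)).mpr (by linarith [r4])
  calc 33/25 * ((hermZ.cfc g).trace).re
        - ((hermX.cfc (fun x => 33/25 - f₁ x) * hermZ.cfc g).trace).re
      ≤ 33/25 * (10390/1107) := hL
    _ < (15 - 3*(59/50) : ℝ)/(9/10) := by norm_num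
    _ ≤ _ := hR

/-- Counterexample: the lower bound Tr[X^{1-ν} ln_ν(Y^{-1/2} X Y^{-1/2})] can be
strictly smaller than (Tr X - (Tr X)^{1-ν}(Tr Y)^ν)/ν under I ≤ Y ≤ X:
take X = [[10,5],[5,5]], Y = diag(1,2), ν = 9/10. -/
theorem tsallis_lower_bounds_incomparable :
    ∃ (X Y : Matrix (Fin 2) (Fin 2) ℂ) (ν : ℝ),
      X = !![10, 5; 5, 5] ∧ Y = !![1, 0; 0, 2] ∧ ν = 9/10 ∧
      X.PosDef ∧ Y.PosDef ∧ (Y - 1).PosSemidef ∧ (X - Y).PosSemidef ∧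
      ((mpow X (1 - ν) * tlog ν (mpow Y (-(1/2)) * X * mpow Y (-(1/2)))).trace).re <
        ((X.trace).re - (X.trace).re ^ (1 - ν) * (Y.trace).re ^ ν) / ν := by
  refine ⟨_, _, _, rfl, rfl, rfl, posdefX, posdefY, psdYm1, psdXmY, ?_⟩
  exact main_ineq
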